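/- arXiv:math/0512130 — 7 statements merged into one kernel-verified Lean document; each statement's English description precedes it below -/
import Mathlib

section
/- The map φ defined on homogeneous (m|n)-supermatrices by φ(M) = −(−1)^{|M|} conj(M)^st (entrywise complex conjugation followed by supertranspose, with the indicated sign) is a graded real structure on sl(m|n,ℂ): φ(M) is homogeneous of the same parity as M; φ is conjugate-linear; φ(φ(M)) = (−1)^{|M|} M; φ([M,N]) = [φ(M), φ(N)] for all homogeneous M, N; and Str(φ(M)) = 0 whenever Str(M) = 0. -/
noncomputable section

open Matrix

/-- The space of `(m|n)`-supermatrices: `(m+n)×(m+n)` complex matrices indexed in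
block form by `Fin m ⊕ Fin n`. -/
abbrev SMat (m n : ℕ) := Matrix (Fin m ⊕ Fin n) (Fin m ⊕ Fin n) ℂ

namespace SMat

variable {m n : ℕ}

/-- The supertranspose: `(fromBlocks P Q R T)^st = fromBlocks Pᵗ Rᵗ (−Qᵗ) Tᵗ`. -/
def st (M : SMat m n) : SMat m n :=
  Matrix.fromBlocks (M.toBlocks₁₁)ᵀ (M.toBlocks₂₁)ᵀ (-(M.toBlocks₁₂)ᵀ) (M.toBlocks₂₂)ᵀ

/-- The supertrace: `Str (fromBlocks P Q R T) = tr P − tr T`. -/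
def Str (M : SMat m n) : ℂ :=
  Matrix.trace M.toBlocks₁₁ - Matrix.trace M.toBlocks₂₂

/-- A supermatrix is even if its off-diagonal blocks vanish. -/
def IsEven (M : SMat m n) : Prop := M.toBlocks₁₂ = 0 ∧ M.toBlocks₂₁ = 0

/-- A supermatrix is odd if its diagonal blocks vanish. -/
def IsOdd (M : SMat m n) : Prop := M.toBlocks₁₁ = 0 ∧ M.toBlocks₂₂ = 0

/-- `Homog p M` means `M` is homogeneous of parity `p ∈ {0,1}`. -/
def Homog (p : ℕ) (M : SMat m n) : Prop := (p = 0 ∧ IsEven M) ∨ (p = 1 ∧ IsOdd M)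

/-- Entrywise complex conjugation. -/
def conjM (M : SMat m n) : SMat m n := M.map (starRingEnd ℂ)

/-- The superbracket of supermatrices of parities `p` and `q`:
`[M,N] = MN − (−1)^{pq} NM`. -/
def sbr (p q : ℕ) (M N : SMat m n) : SMat m n :=
  M * N - ((-1 : ℂ) ^ (p * q)) • (N * M)

end SMat

namespace SMat

/-- The graded real structure `φ(M) = −(−1)^{|M|} conj(M)^st` on supermatrices of
parity `p`. -/
def phi {m n : ℕ} (p : ℕ) (M : SMat m n) : SMat m n :=
  (-((-1 : ℂ) ^ p)) • st (conjM M)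

end SMat

namespace SMat

variable {m' n' : ℕ}

lemma phi_fromBlocks' (p : ℕ) (P : Matrix (Fin m') (Fin m') ℂ) (Q : Matrix (Fin m') (Fin n') ℂ)
    (R : Matrix (Fin n') (Fin m') ℂ) (T : Matrix (Fin n') (Fin n') ℂ) :
    phi p (fromBlocks P Q R T) =
      fromBlocks ((-((-1:ℂ)^p)) • Pᴴ) ((-((-1:ℂ)^p)) • Rᴴ) (((-1:ℂ)^p) • Qᴴ) ((-((-1:ℂ)^p)) • Tᴴ) := by
  ext (i|i) (j|j) <;>
    simp [phi, st, conjM, Matrix.fromBlocks_map, Matrix.conjTranspose_apply]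

lemma homog_cases' {p : ℕ} {M : SMat m' n'} (h : Homog p M) :
    (p = 0 ∧ ∃ P T, M = fromBlocks P 0 0 T) ∨
    (p = 1 ∧ ∃ Q R, M = fromBlocks 0 Q R 0) := by
  rcases h with ⟨hp, h1, h2⟩ | ⟨hp, h1, h2⟩
  · exact Or.inl ⟨hp, M.toBlocks₁₁, M.toBlocks₂₂, by rw [← h1, ← h2, fromBlocks_toBlocks]⟩
  · exact Or.inr ⟨hp, M.toBlocks₁₂, M.toBlocks₂₁, by rw [← h1, ← h2, fromBlocks_toBlocks]⟩

end SMat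

open SMat in
/-- `φ(M) = −(−1)^{|M|} conj(M)^st` is a graded real structure on
`sl(m|n,ℂ)`: it preserves parity, is conjugate-linear, satisfies
`φ(φ(M)) = (−1)^{|M|} M`, is a morphism for the superbracket, and preserves
supertracelessness. -/
theorem phi_graded_real_structure (m n : ℕ) :
    -- φ(M) is homogeneous of the same parity as M
    (∀ (p : ℕ) (M : SMat m n), Homog p M → Homog p (phi p M)) ∧
    -- φ is conjugate-linear
    (∀ (p : ℕ) (c : ℂ) (M N : SMat m n),
      phi p (c • M + N) = (starRingEnd ℂ c) • phi p M + phi p N) ∧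
    -- φ(φ(M)) = (−1)^{|M|} M
    (∀ (p : ℕ) (M : SMat m n), Homog p M → phi p (phi p M) = ((-1 : ℂ) ^ p) • M) ∧
    -- φ([M,N]) = [φ(M),φ(N)]
    (∀ (p q : ℕ) (M N : SMat m n), Homog p M → Homog q N →
      phi (p + q) (sbr p q M N) = sbr p q (phi p M) (phi q N)) ∧
    -- Str(φ(M)) = 0 whenever Str(M) = 0
    (∀ (p : ℕ) (M : SMat m n), Homog p M → Str M = 0 → Str (phi p M) = 0) := by
  refine ⟨?_, ?_, ?_, ?_, ?_⟩
  · intro p M h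
    rcases homog_cases' h with ⟨rfl, P, T, rfl⟩ | ⟨rfl, Q, R, rfl⟩
    · exact Or.inl ⟨rfl, by simp [phi_fromBlocks', IsEven]⟩
    · exact Or.inr ⟨rfl, by simp [phi_fromBlocks', IsOdd]⟩
  · intro p c M N
    ext (i|i) (j|j) <;>
      simp [phi, st, conjM, Matrix.toBlocks₁₁, Matrix.toBlocks₁₂, Matrix.toBlocks₂₁,
        Matrix.toBlocks₂₂, Matrix.add_apply, mul_add] <;> ring
  · intro p M h
    rcases homog_cases' h with ⟨rfl, P, T, rfl⟩ | ⟨rfl, Q, R, rfl⟩ <;>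
      simp [phi_fromBlocks', fromBlocks_smul, smul_smul, fromBlocks_neg]
  · intro p q M N hM hN
    rcases homog_cases' hM with ⟨rfl, P, T, rfl⟩ | ⟨rfl, Q, R, rfl⟩ <;>
      rcases homog_cases' hN with ⟨rfl, P', T', rfl⟩ | ⟨rfl, Q', R', rfl⟩ <;>
      simp only [sbr, Nat.mul_zero, Nat.zero_mul, Nat.mul_one, Nat.one_mul, Nat.reduceAdd,
        pow_zero, pow_one, neg_one_sq, one_smul, neg_smul, neg_neg, sub_eq_add_neg,
        sub_neg_eq_add, fromBlocks_multiply, Matrix.mul_zero, Matrix.zero_mul, add_zero,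
        zero_add, fromBlocks_neg, fromBlocks_add, neg_zero, phi_fromBlocks', fromBlocks_smul,
        smul_zero, fromBlocks_inj, conjTranspose_add, conjTranspose_neg, conjTranspose_mul,
        conjTranspose_zero, Matrix.smul_mul, Matrix.mul_smul, smul_neg, smul_smul, smul_add,
        mul_neg, neg_mul, neg_add_rev] <;>
      (repeat' constructor) <;> (try simp only [Matrix.neg_mul, Matrix.mul_neg, neg_neg]) <;> abel
  · intro p M h hs
    rcases homog_cases' h with ⟨rfl, P, T, rfl⟩ | ⟨rfl, Q, R, rfl⟩ <;>
      simp only [Str, phi_fromBlocks', toBlocks_fromBlocks₁₁, toBlocks_fromBlocks₂₂,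
        trace_smul, trace_conjTranspose, smul_zero, trace_zero, sub_self] at hs ⊢
    · rw [sub_eq_zero] at hs
      rw [hs]; ring
end
end

section
/- The double decomposes as 𝔡 = 𝔤 ∔ 𝔟: for every pair (A,B) of (m+n)×(m+n) complex matrices with Str(A) = Str(B) = 0, there exists a unique (m+n)×(m+n) complex matrix X such that A − X is lower triangular, B − X is upper triangular, and the diagonal of (A − X) plus the diagonal of (B − X) is zero; moreover this X satisfies Str(X) = 0, so (A,B) = (X,X) + (A−X, B−X) with (X,X) ∈ 𝔤 and (A−X, B−X) ∈ 𝔟, and this decomposition is unique. -/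
/-! The three conditions on `X` pin down its entries one by one: above the diagonal `X` agrees
with `A`, below it with `B`, and on it `X` is the average of `A` and `B`. Since the supertrace
only sees the diagonal and is linear, `Str X = (Str A + Str B) / 2 = 0`. -/

noncomputable section

/-- The supertrace of an `(m+n)×(m+n)` complex matrix: the first `m` diagonal
entries count with sign `+1`, the last `n` with sign `−1`. -/
def StrF (m n : ℕ) (M : Matrix (Fin (m + n)) (Fin (m + n)) ℂ) : ℂ :=
  ∑ i : Fin (m + n), (if (i : ℕ) < m then 1 else -1) * M i i

/-- Lower triangular with respect to the total order on the `m+n` indices. -/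
def LowerTriF {N : ℕ} (M : Matrix (Fin N) (Fin N) ℂ) : Prop :=
  ∀ i j : Fin N, i < j → M i j = 0

/-- Upper triangular with respect to the total order on the `m+n` indices. -/
def UpperTriF {N : ℕ} (M : Matrix (Fin N) (Fin N) ℂ) : Prop :=
  ∀ i j : Fin N, j < i → M i j = 0

namespace DoubleDecomposition

variable {N : ℕ}

def gComponent (A B : Matrix (Fin N) (Fin N) ℂ) : Matrix (Fin N) (Fin N) ℂ :=
  Matrix.of fun i j => if i < j then A i j else if j < i then B i j else (A i j + B i j) / 2

def IsGComponent (A B X : Matrix (Fin N) (Fin N) ℂ) : Prop :=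
  LowerTriF (A - X) ∧ UpperTriF (B - X) ∧ ∀ i, (A - X) i i + (B - X) i i = 0

theorem isGComponent_iff_eq {A B X : Matrix (Fin N) (Fin N) ℂ} :
    IsGComponent A B X ↔ X = gComponent A B := by
  constructor
  · rintro ⟨hL, hU, hD⟩
    ext i j
    rcases lt_trichotomy i j with hij | rfl | hji
    · simpa [gComponent, hij, sub_eq_zero, eq_comm] using hL i j hij
    · have hDi : A i i - X i i + (B i i - X i i) = 0 := hD i
      simp only [gComponent, Matrix.of_apply, lt_irrefl, if_false]
      linear_combination -hDi / 2
    · simpa [gComponent, hji, hji.not_gt, sub_eq_zero, eq_comm] using hU i j hji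
  · rintro rfl
    refine ⟨fun i j hij => ?_, fun i j hji => ?_, fun i => ?_⟩
    · simp [gComponent, hij]
    · simp [gComponent, hji, hji.not_gt]
    · simp only [gComponent, Matrix.sub_apply, Matrix.of_apply, lt_irrefl, if_false]
      ring

theorem strF_gComponent {m n : ℕ} (A B : Matrix (Fin (m + n)) (Fin (m + n)) ℂ) :
    StrF m n (gComponent A B) = (StrF m n A + StrF m n B) / 2 := by
  simp only [StrF, gComponent, Matrix.of_apply, lt_irrefl, if_false, ← Finset.sum_add_distrib,
    Finset.sum_div]
  refine Finset.sum_congr rfl fun i _ => ?_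
  ring

end DoubleDecomposition

open DoubleDecomposition in
/-- the double decomposes as `𝔡 = 𝔤 ∔ 𝔟`: for every pair `(A,B)` of
supertraceless matrices there is a unique `X` with `A − X` lower triangular, `B − X`
upper triangular and `diag(A−X) + diag(B−X) = 0`; moreover this `X` is supertraceless,
so `(A,B) = (X,X) + (A−X,B−X)` with `(X,X) ∈ 𝔤`, `(A−X,B−X) ∈ 𝔟`, uniquely. -/
theorem double_decomposition (m n : ℕ)
    (A B : Matrix (Fin (m + n)) (Fin (m + n)) ℂ)
    (hA : StrF m n A = 0) (hB : StrF m n B = 0) :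
    (∃! X : Matrix (Fin (m + n)) (Fin (m + n)) ℂ,
      LowerTriF (A - X) ∧ UpperTriF (B - X) ∧ ∀ i, (A - X) i i + (B - X) i i = 0) ∧
    (∀ X : Matrix (Fin (m + n)) (Fin (m + n)) ℂ,
      (LowerTriF (A - X) ∧ UpperTriF (B - X) ∧ ∀ i, (A - X) i i + (B - X) i i = 0) →
      StrF m n X = 0) := by
  refine ⟨⟨gComponent A B, isGComponent_iff_eq.2 rfl, fun X hX => isGComponent_iff_eq.1 hX⟩,
    fun X hX => ?_⟩
  rw [isGComponent_iff_eq.1 hX, strF_gComponent, hA, hB, add_zero, zero_div]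
end
end

section
/- Both 𝔤 and 𝔟 are isotropic for the scalar product ((A,B),(C,D))_𝔡 = −(i/2)(Str(AC) − Str(BD)) on 𝔡: (i) for all supertraceless A, C, one has ((A,A),(C,C))_𝔡 = 0; (ii) if A and C are lower triangular, B and D are upper triangular, diag(A) + diag(B) = 0, diag(C) + diag(D) = 0, and Str(A) = Str(B) = Str(C) = Str(D) = 0, then Str(AC) = Str(BD), i.e. ((A,B),(C,D))_𝔡 = 0. -/
noncomputable section

lemma diag_mul_lower {N : ℕ} (A C : Matrix (Fin N) (Fin N) ℂ)
    (hA : LowerTriF A) (hC : LowerTriF C) (i : Fin N) :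
    (A * C) i i = A i i * C i i := by
  rw [Matrix.mul_apply]
  rw [Finset.sum_eq_single i]
  · intro j _ hj
    rcases lt_or_gt_of_ne hj with h | h
    · rw [hC j i h, mul_zero]
    · rw [hA i j h, zero_mul]
  · simp

lemma diag_mul_upper {N : ℕ} (A C : Matrix (Fin N) (Fin N) ℂ)
    (hA : UpperTriF A) (hC : UpperTriF C) (i : Fin N) :
    (A * C) i i = A i i * C i i := by
  rw [Matrix.mul_apply]
  rw [Finset.sum_eq_single i]
  · intro j _ hj
    rcases lt_or_gt_of_ne hj with h | h
    · rw [hA i j h, zero_mul]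
    · rw [hC j i h, mul_zero]
  · simp

/-- both `𝔤` and `𝔟` are isotropic for the scalar product
`((A,B),(C,D))_𝔡 = −(i/2)(Str(AC) − Str(BD))` on the double: (i) diagonal pairs
pair to zero; (ii) pairs in `𝔟` (lower/upper triangular with opposite diagonals)
pair to zero, i.e. `Str(AC) = Str(BD)`. -/
theorem g_and_b_isotropic (m n : ℕ) :
    -- (i) 𝔤 is isotropic
    (∀ A C : Matrix (Fin (m + n)) (Fin (m + n)) ℂ,
      StrF m n A = 0 → StrF m n C = 0 →
      (-(Complex.I / 2)) * (StrF m n (A * C) - StrF m n (A * C)) = 0) ∧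
    -- (ii) 𝔟 is isotropic
    (∀ A B C D : Matrix (Fin (m + n)) (Fin (m + n)) ℂ,
      LowerTriF A → UpperTriF B → LowerTriF C → UpperTriF D →
      (∀ i, A i i + B i i = 0) → (∀ i, C i i + D i i = 0) →
      StrF m n A = 0 → StrF m n B = 0 → StrF m n C = 0 → StrF m n D = 0 →
      StrF m n (A * C) = StrF m n (B * D) ∧
      (-(Complex.I / 2)) * (StrF m n (A * C) - StrF m n (B * D)) = 0) := by
  constructor
  · intro A C _ _; ring
  · intro A B C D hA hB hC hD hAB hCD _ _ _ _
    have key : StrF m n (A * C) = StrF m n (B * D) := by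
      unfold StrF
      apply Finset.sum_congr rfl
      intro i _
      rw [diag_mul_lower A C hA hC i, diag_mul_upper B D hB hD i]
      have h1 : B i i = -A i i := by linear_combination hAB i
      have h2 : D i i = -C i i := by linear_combination hCD i
      rw [h1, h2]; ring
    exact ⟨key, by rw [key]; ring⟩
end
end

section
/- The scalar product on the double is compatible with the graded real structure: write φ(A,B) = (−(−1)^{p} conj(B)^st, −(−1)^{p} conj(A)^st) for a pair (A,B) of homogeneous (m|n)-supermatrices of common parity p, and likewise (C,D) of common parity q. Then ((φ(A,B)), (φ(C,D)))_𝔡 = conj( ((A,B),(C,D))_𝔡 ), where ((A,B),(C,D))_𝔡 = −(i/2)(Str(AC) − Str(BD)). -/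
noncomputable section

open Matrix

namespace SMat

variable {m n : ℕ}

lemma Str_st_mul (X Y : SMat m n) : Str (st X * st Y) = Str (X * Y) := by
  have hX := Matrix.fromBlocks_toBlocks X
  have hY := Matrix.fromBlocks_toBlocks Y
  unfold Str st
  conv_rhs => rw [← hX, ← hY]
  simp [Matrix.fromBlocks_multiply, Matrix.trace_add, Matrix.mul_neg, Matrix.neg_mul,
    ← Matrix.transpose_mul, Matrix.trace_transpose, Matrix.trace_mul_comm (X.toBlocks₁₂)]
  rw [Matrix.trace_mul_comm (Y.toBlocks₁₁), Matrix.trace_mul_comm (Y.toBlocks₁₂),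
    Matrix.trace_mul_comm (Y.toBlocks₂₁), Matrix.trace_mul_comm (Y.toBlocks₂₂)]
  ring

lemma Str_conjM_mul (X Y : SMat m n) :
    Str (conjM X * conjM Y) = starRingEnd ℂ (Str (X * Y)) := by
  have : conjM X * conjM Y = conjM (X * Y) := by
    simp [conjM, Matrix.map_mul]
  rw [this]
  unfold Str conjM
  have h1 : ((X * Y).map (starRingEnd ℂ)).toBlocks₁₁ = ((X * Y).toBlocks₁₁).map (starRingEnd ℂ) := rfl
  have h2 : ((X * Y).map (starRingEnd ℂ)).toBlocks₂₂ = ((X * Y).toBlocks₂₂).map (starRingEnd ℂ) := rfl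
  have ht : ∀ (k : ℕ) (N : Matrix (Fin k) (Fin k) ℂ),
      (N.map (starRingEnd ℂ)).trace = starRingEnd ℂ N.trace := by
    intro k N
    simp [Matrix.trace, Matrix.diag, map_sum]
  rw [h1, h2, ht, ht, map_sub]

lemma Str_smul (c : ℂ) (X : SMat m n) : Str (c • X) = c * Str X := by
  unfold Str
  have h1 : (c • X).toBlocks₁₁ = c • X.toBlocks₁₁ := rfl
  have h2 : (c • X).toBlocks₂₂ = c • X.toBlocks₂₂ := rfl
  rw [h1, h2, Matrix.trace_smul, Matrix.trace_smul]
  simp; ring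

lemma Str_phi_mul (p q : ℕ) (X Y : SMat m n) :
    Str (phi p X * phi q Y) = ((-1 : ℂ)^(p+q)) * starRingEnd ℂ (Str (X * Y)) := by
  unfold phi
  rw [Matrix.smul_mul, Matrix.mul_smul, smul_smul, Str_smul, Str_st_mul, Str_conjM_mul]
  ring

lemma Str_even_odd {X Y : SMat m n} (h : (IsEven X ∧ IsOdd Y) ∨ (IsOdd X ∧ IsEven Y)) :
    Str (X * Y) = 0 := by
  have hX := Matrix.fromBlocks_toBlocks X
  have hY := Matrix.fromBlocks_toBlocks Y
  unfold Str
  conv_lhs => rw [← hX, ← hY]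
  rcases h with ⟨⟨h1, h2⟩, h3, h4⟩ | ⟨⟨h1, h2⟩, h3, h4⟩ <;>
    rw [h1, h2, h3, h4] <;>
    simp [Matrix.fromBlocks_multiply]

end SMat

open SMat in
/-- the scalar product `((A,B),(C,D))_𝔡 = −(i/2)(Str(AC) − Str(BD))`
on the double is compatible with the graded real structure
`φ(A,B) = (−(−1)^p conj(B)^st, −(−1)^p conj(A)^st)`:
`(φ(A,B), φ(C,D))_𝔡 = conj ((A,B),(C,D))_𝔡`. -/
theorem scalar_product_compatible_phi (m n : ℕ) (p q : ℕ) (A B C D : SMat m n)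
    (hA : Homog p A) (hB : Homog p B) (hC : Homog q C) (hD : Homog q D) :
    (-(Complex.I / 2)) * (Str (phi p B * phi q D) - Str (phi p A * phi q C)) =
      starRingEnd ℂ ((-(Complex.I / 2)) * (Str (A * C) - Str (B * D))) := by
  have hc : starRingEnd ℂ (-(Complex.I / 2)) = Complex.I / 2 := by
    rw [map_neg, map_div₀, Complex.conj_I, Complex.conj_ofNat]
    ring
  have even0 : ∀ (M : SMat m n), Homog 0 M → IsEven M := by
    rintro M (⟨_, h⟩ | ⟨h, _⟩)
    · exact h
    · simp at h
  have odd1 : ∀ (M : SMat m n), Homog 1 M → IsOdd M := by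
    rintro M (⟨h, _⟩ | ⟨_, h⟩)
    · simp at h
    · exact h
  rw [Str_phi_mul, Str_phi_mul, _root_.map_mul, map_sub, hc]
  rcases hA with ⟨hp, hA⟩ | ⟨hp, hA⟩ <;> rcases hC with ⟨hq, hC⟩ | ⟨hq, hC⟩ <;>
    subst hp <;> subst hq
  · rw [show ((-1 : ℂ)) ^ (0 + 0) = 1 by norm_num]; ring
  · rw [Str_even_odd (Or.inl ⟨hA, hC⟩),
      Str_even_odd (Or.inl ⟨even0 B hB, odd1 D hD⟩)]
    simp
  · rw [Str_even_odd (Or.inr ⟨hA, hC⟩),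
      Str_even_odd (Or.inr ⟨odd1 B hB, even0 D hD⟩)]
    simp
  · rw [show ((-1 : ℂ)) ^ (1 + 1) = 1 by norm_num]; ring
end
end

section
/- Let L be a Lie algebra over a field k and let 𝔤, 𝔟 be Lie subalgebras of L whose underlying submodules are complementary (L = 𝔤 ⊕ 𝔟 as a vector space). Let π_𝔤 and π_𝔟 denote the linear projections of L onto 𝔤 and 𝔟 associated with this decomposition, and set R = π_𝔟 − π_𝔤 (an endomorphism of L). Then R satisfies the modified classical Yang–Baxter equation: for all x, y ∈ L, ⁅R(x), R(y)⁆ = R(⁅R(x), y⁆ + ⁅x, R(y)⁆) − ⁅x, y⁆. -/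
/-!
Write `x = a + c` and `y = a' + c'` with `a, a' ∈ 𝔤` and `c, c' ∈ 𝔟`, so that `R x = c - a` and
`R y = c' - a'`. The mixed brackets cancel in `⁅R x, y⁆ + ⁅x, R y⁆ = 2⁅c, c'⁆ - 2⁅a, a'⁆`, and since
`𝔤` and `𝔟` are subalgebras, `R` maps this to `2⁅c, c'⁆ + 2⁅a, a'⁆`; subtracting `⁅x, y⁆` leaves
`⁅c - a, c' - a'⁆`.
-/

namespace Submodule

variable {K E : Type*} [Ring K] [AddCommGroup E] [Module K E] {p q : Submodule K E}

lemma projection_sub_projection_apply_of_mem_left (h : IsCompl p q) {x : E} (hx : x ∈ p) :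
    (q.projection p h.symm - p.projection q h) x = -x := by
  rw [LinearMap.sub_apply, projection_apply_of_mem_right h.symm hx,
    projection_apply_of_mem_left h hx, zero_sub]

lemma projection_sub_projection_apply_of_mem_right (h : IsCompl p q) {x : E} (hx : x ∈ q) :
    (q.projection p h.symm - p.projection q h) x = x := by
  rw [LinearMap.sub_apply, projection_apply_of_mem_left h.symm hx,
    projection_apply_of_mem_right h hx, sub_zero]

end Submodule

namespace LieSubalgebra

variable {K L : Type*} [CommRing K] [LieRing L] [LieAlgebra K L]

theorem modifiedYangBaxter_of_codisjoint {g b : LieSubalgebra K L}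
    (hgb : Codisjoint g.toSubmodule b.toSubmodule) {R : L →ₗ[K] L}
    (hg : ∀ u ∈ g, R u = -u) (hb : ∀ v ∈ b, R v = v) (x y : L) :
    ⁅R x, R y⁆ = R (⁅R x, y⁆ + ⁅x, R y⁆) - ⁅x, y⁆ := by
  have hsup : g.toSubmodule ⊔ b.toSubmodule = ⊤ := codisjoint_iff.1 hgb
  obtain ⟨a, ha, c, hc, rfl⟩ := Submodule.mem_sup.1 (hsup ▸ Submodule.mem_top : x ∈ _)
  obtain ⟨a', ha', c', hc', rfl⟩ := Submodule.mem_sup.1 (hsup ▸ Submodule.mem_top : y ∈ _)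
  have hRx : R (a + c) = c - a := by rw [map_add, hg a ha, hb c hc, neg_add_eq_sub]
  have hRy : R (a' + c') = c' - a' := by rw [map_add, hg a' ha', hb c' hc', neg_add_eq_sub]
  have hsum : ⁅R (a + c), a' + c'⁆ + ⁅a + c, R (a' + c')⁆ = 2 • ⁅c, c'⁆ - 2 • ⁅a, a'⁆ := by
    rw [hRx, hRy]
    simp only [add_lie, lie_add, sub_lie, lie_sub]
    abel
  rw [hsum, map_sub, map_nsmul, map_nsmul, hb _ (b.lie_mem hc hc'), hg _ (g.lie_mem ha ha'), hRx,
    hRy]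
  simp only [add_lie, lie_add, sub_lie, lie_sub]
  abel

end LieSubalgebra

/-- if a Lie algebra `L` over a field `k` decomposes as a vector space
into complementary Lie subalgebras `𝔤` and `𝔟`, then `R = π_𝔟 − π_𝔤` satisfies the
modified classical Yang–Baxter equation
`⁅R x, R y⁆ = R (⁅R x, y⁆ + ⁅x, R y⁆) − ⁅x, y⁆`. -/
theorem projection_difference_satisfies_mcybe
    {k L : Type*} [Field k] [LieRing L] [LieAlgebra k L]
    (g b : LieSubalgebra k L)
    (h : IsCompl g.toSubmodule b.toSubmodule)
    (R : L →ₗ[k] L)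
    (hR : R =
      b.toSubmodule.subtype ∘ₗ
          Submodule.linearProjOfIsCompl b.toSubmodule g.toSubmodule h.symm -
        g.toSubmodule.subtype ∘ₗ
          Submodule.linearProjOfIsCompl g.toSubmodule b.toSubmodule h)
    (x y : L) :
    ⁅R x, R y⁆ = R (⁅R x, y⁆ + ⁅x, R y⁆) - ⁅x, y⁆ := by
  -- `Submodule.linearProjOfIsCompl` is a deprecated alias of `Submodule.projectionOnto`.
  replace hR : R = b.toSubmodule.projection g.toSubmodule h.symm -
      g.toSubmodule.projection b.toSubmodule h := hR
  subst hR
  exact LieSubalgebra.modifiedYangBaxter_of_codisjoint h.codisjoint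
    (fun _ hu ↦ Submodule.projection_sub_projection_apply_of_mem_left h hu)
    (fun _ hv ↦ Submodule.projection_sub_projection_apply_of_mem_right h hv) x y
end

section
/- The derivative of the superdeterminant at the identity is the supertrace: let P ∈ M_m(ℂ), Q be an m×n complex matrix, R an n×m complex matrix, and T ∈ M_n(ℂ). Then the function f : ℂ → ℂ defined by f(t) = det( (1 + tP) − t²·Q·(1 + tT)⁻¹·R ) / det(1 + tT), where (1 + tT)⁻¹ denotes the matrix inverse (interpreted as Matrix.inverse, which agrees with the true inverse for t near 0), satisfies HasDerivAt f (tr P − tr T) 0, i.e. f'(0) = tr(P) − tr(T) = Str(fromBlocks P Q R T). -/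
/-! In the Leibniz expansion of `det (1 + t • M + o(t))` only the identity permutation has a
first-order term, which gives Jacobi's formula `d/dt det = trace` at the identity. The Schur
complement correction `t² • Q (1 + t • T)⁻¹ R` is `o(t)` because the inverse is continuous
at `1`, so numerator and denominator have derivatives `tr P` and `tr T` at `0`, both with
value `1`. -/

open Matrix Filter Asymptotics Topology

variable {𝕜 ι : Type*} [NontriviallyNormedField 𝕜] [Fintype ι] [DecidableEq ι]

lemma Equiv.Perm.exists_ne_and_apply_ne {α : Type*} {σ : Equiv.Perm α} (hσ : σ ≠ 1)
    (i : α) : ∃ j, j ≠ i ∧ σ j ≠ j := by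
  obtain ⟨a, ha⟩ : ∃ a, σ a ≠ a := by
    by_contra! h
    exact hσ (Equiv.ext h)
  rcases eq_or_ne a i with rfl | hai
  · exact ⟨σ a, ha, fun h => ha (σ.injective h)⟩
  · exact ⟨a, hai, ha⟩

lemma Matrix.prod_erase_one_apply_perm_eq_zero {R : Type*} [CommMonoidWithZero R]
    {σ : Equiv.Perm ι} (hσ : σ ≠ 1) (i : ι) :
    ∏ j ∈ Finset.univ.erase i, (1 : Matrix ι ι R) (σ j) j = 0 := by
  obtain ⟨j, hji, hj⟩ := σ.exists_ne_and_apply_ne hσ i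
  exact Finset.prod_eq_zero (Finset.mem_erase.mpr ⟨hji, Finset.mem_univ j⟩) (one_apply_ne hj)

theorem Matrix.hasDerivAt_det_of_eq_one {B : 𝕜 → Matrix ι ι 𝕜} {B' : Matrix ι ι 𝕜}
    {x : 𝕜} (hB : ∀ i j, HasDerivAt (fun t => B t i j) (B' i j) x) (hx : B x = 1) :
    HasDerivAt (fun t => (B t).det) B'.trace x := by
  simp only [det_apply, Units.smul_def, zsmul_eq_mul]
  have hterm : ∀ σ : Equiv.Perm ι,
      HasDerivAt (fun t => ((Equiv.Perm.sign σ : ℤ) : 𝕜) * ∏ i, B t (σ i) i)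
        (((Equiv.Perm.sign σ : ℤ) : 𝕜) *
          ∑ i, (∏ j ∈ Finset.univ.erase i, B x (σ j) j) • B' (σ i) i) x :=
    fun σ => (HasDerivAt.fun_finsetProd fun i _ => hB (σ i) i).const_mul _
  refine (HasDerivAt.fun_sum fun σ (_ : σ ∈ Finset.univ) => hterm σ).congr_deriv ?_
  rw [Finset.sum_eq_single_of_mem 1 (Finset.mem_univ _) fun σ _ hσ => by
    simp [hx, prod_erase_one_apply_perm_eq_zero hσ]]
  simp [hx, trace, smul_eq_mul]

lemma hasDerivAt_sq_mul_of_continuousAt {c : 𝕜 → 𝕜} (hc : ContinuousAt c 0) :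
    HasDerivAt (fun t => t ^ 2 * c t) 0 0 := by
  have hlim : (fun t => t * c t) =o[𝓝 0] (fun _ => (1 : 𝕜)) := by
    rw [isLittleO_one_iff]
    simpa using (continuousAt_id.fun_mul hc).tendsto
  rw [hasDerivAt_iff_isLittleO_nhds_zero]
  simpa [pow_two, mul_assoc] using (isBigO_refl (fun t : 𝕜 => t) _).mul_isLittleO hlim

theorem Matrix.hasDerivAt_det_one_add_smul_sub_sq_smul (P : Matrix ι ι 𝕜)
    {C : 𝕜 → Matrix ι ι 𝕜} (hC : ContinuousAt C 0) :
    HasDerivAt (fun t => (1 + t • P - t ^ 2 • C t).det) P.trace 0 := by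
  refine hasDerivAt_det_of_eq_one (fun i j => ?_) (by simp)
  have hCij : ContinuousAt (fun t => C t i j) 0 :=
    (continuous_id.matrix_elem i j).continuousAt.comp hC
  have hlin : HasDerivAt (fun t => (1 : Matrix ι ι 𝕜) i j + t * P i j) (P i j) 0 :=
    (hasDerivAt_mul_const (P i j)).const_add _
  simpa [smul_eq_mul] using hlin.fun_sub (hasDerivAt_sq_mul_of_continuousAt hCij)

theorem Matrix.hasDerivAt_det_one_add_smul (T : Matrix ι ι 𝕜) :
    HasDerivAt (fun t : 𝕜 => (1 + t • T).det) T.trace 0 := by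
  simpa using hasDerivAt_det_one_add_smul_sub_sq_smul T (C := 0) continuousAt_const

/-- the derivative of the superdeterminant at the identity is the
supertrace: with `f(t) = det((1 + tP) − t²·Q·(1 + tT)⁻¹·R) / det(1 + tT)`
(i.e. `f(t) = sdet(1 + t·fromBlocks P Q R T)`, the inverse being the matrix
inverse `Matrix.inverse`, which is `⁻¹` in Mathlib), one has
`f'(0) = tr P − tr T = Str(fromBlocks P Q R T)`. -/
theorem sdet_deriv_at_one {m n : ℕ}
    (P : Matrix (Fin m) (Fin m) ℂ) (Q : Matrix (Fin m) (Fin n) ℂ)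
    (R : Matrix (Fin n) (Fin m) ℂ) (T : Matrix (Fin n) (Fin n) ℂ) :
    HasDerivAt
      (fun t : ℂ =>
        Matrix.det ((1 + t • P) - (t ^ 2) • (Q * (1 + t • T)⁻¹ * R)) /
          Matrix.det (1 + t • T))
      (Matrix.trace P - Matrix.trace T) 0 := by
  have hinv : ContinuousAt (fun t : ℂ => (1 + t • T)⁻¹) 0 := by
    refine ContinuousAt.comp (f := fun t : ℂ => 1 + t • T) ?_ (by fun_prop)
    refine continuousAt_matrix_inv _ ?_
    simp
  have hC : ContinuousAt (fun t : ℂ => Q * (1 + t • T)⁻¹ * R) 0 :=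
    ((continuous_const.matrix_mul continuous_id).matrix_mul continuous_const).continuousAt.comp hinv
  have hnum := hasDerivAt_det_one_add_smul_sub_sq_smul P hC
  simpa using hnum.fun_div (hasDerivAt_det_one_add_smul T) (by simp)
end

section
/- The subspace 𝔟 of the double is invariant under the graded real structure: if (A,B) is a pair of homogeneous (m|n)-supermatrices of common parity p with Str(A) = Str(B) = 0, A lower triangular, B upper triangular, and diag(A) + diag(B) = 0, then φ(A,B) = (−(−1)^{p} conj(B)^st, −(−1)^{p} conj(A)^st) again satisfies: both components are supertraceless, the first component is lower triangular, the second component is upper triangular, and the sum of their diagonals is zero. Likewise 𝔤 = {(X,X)} is invariant under φ. -/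
noncomputable section

open Matrix

namespace SMat

/-- The total order on the `m+n` block indices, via their position `0,…,m+n−1`. -/
def ord (m n : ℕ) : Fin m ⊕ Fin n → ℕ :=
  Sum.elim (fun i => (i : ℕ)) (fun j => m + (j : ℕ))

/-- Lower triangular with respect to the total order on the `m+n` indices. -/
def LowerTri {m n : ℕ} (M : SMat m n) : Prop :=
  ∀ i j, ord m n i < ord m n j → M i j = 0

/-- Upper triangular with respect to the total order on the `m+n` indices. -/
def UpperTri {m n : ℕ} (M : SMat m n) : Prop :=
  ∀ i j, ord m n j < ord m n i → M i j = 0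

end SMat

namespace SMat
variable {m n : ℕ}

lemma phi_apply (p : ℕ) (M : SMat m n) (i j : Fin m ⊕ Fin n) :
    phi p M i j = (-((-1:ℂ)^p)) * st (conjM M) i j := rfl

lemma st_apply_zero (M : SMat m n) (i j : Fin m ⊕ Fin n) (h : M j i = 0) :
    st M i j = 0 := by
  cases i <;> cases j <;>
    simp [st, Matrix.fromBlocks, Matrix.toBlocks₁₁, Matrix.toBlocks₁₂,
      Matrix.toBlocks₂₁, Matrix.toBlocks₂₂, Matrix.transpose_apply, h] at h ⊢

lemma phi_diag (p : ℕ) (M : SMat m n) (i : Fin m ⊕ Fin n) :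
    phi p M i i = (-((-1:ℂ)^p)) * star (M i i) := by
  cases i <;>
    simp [phi, st, conjM, Matrix.fromBlocks, Matrix.toBlocks₁₁, Matrix.toBlocks₂₂]

lemma str_phi (p : ℕ) (M : SMat m n) (h : Str M = 0) : Str (phi p M) = 0 := by
  have h1 : Matrix.trace (phi p M).toBlocks₁₁ = (-((-1:ℂ)^p)) * star (Matrix.trace M.toBlocks₁₁) := by
    simp [Matrix.trace, Matrix.diag, phi_diag, Finset.mul_sum, Matrix.toBlocks₁₁]
  have h2 : Matrix.trace (phi p M).toBlocks₂₂ = (-((-1:ℂ)^p)) * star (Matrix.trace M.toBlocks₂₂) := by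
    simp [Matrix.trace, Matrix.diag, phi_diag, Finset.mul_sum, Matrix.toBlocks₂₂]
  have h0 : Matrix.trace M.toBlocks₁₁ = Matrix.trace M.toBlocks₂₂ := by
    have := h; unfold Str at this; linear_combination this
  rw [Str, h1, h2, h0]
  ring

end SMat

open SMat in
/-- the subspace `𝔟` of the double is invariant under the graded real
structure `φ(A,B) = (−(−1)^p conj(B)^st, −(−1)^p conj(A)^st)`: it again consists of a
supertraceless lower-triangular first component and upper-triangular second component
whose diagonals sum to zero; likewise `𝔤 = {(X,X)}` is invariant under `φ`. -/
theorem b_and_g_invariant_under_phi (m n : ℕ) (p : ℕ) :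
    (∀ A B : SMat m n, Homog p A → Homog p B → Str A = 0 → Str B = 0 →
      LowerTri A → UpperTri B → (∀ i, A i i + B i i = 0) →
      Str (phi p B) = 0 ∧ Str (phi p A) = 0 ∧
      LowerTri (phi p B) ∧ UpperTri (phi p A) ∧
      (∀ i, phi p B i i + phi p A i i = 0)) ∧
    (∀ X : SMat m n, Homog p X → Str X = 0 → Str (phi p X) = 0) := by
  refine ⟨fun A B _ _ hA hB hAl hBu hdiag => ⟨str_phi p B hB, str_phi p A hA, ?_, ?_, ?_⟩,
    fun X _ hX => str_phi p X hX⟩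
  · intro i j hij
    rw [phi_apply]
    rw [st_apply_zero]
    · ring
    · simp [conjM, hBu j i hij]
  · intro i j hij
    rw [phi_apply]
    rw [st_apply_zero]
    · ring
    · simp [conjM, hAl j i hij]
  · intro i
    rw [phi_diag, phi_diag, ← mul_add, ← star_add]
    rw [add_comm (B i i), hdiag i]
    simp
end
end
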